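/- arXiv:2210.09351 — 5 statements merged into one kernel-verified Lean document; each statement's English description precedes it below -/
import Mathlib

section
/- Let M be an m×n matrix with entries in a commutative ring R, let c be a positive integer with c ≤ n, and let M|_c denote the submatrix consisting of the first c columns of M. Then for every column index b with c < b ≤ n and every positive integer k, the product of the entry M₁b with any k×k minor of M|_c lies in the ideal generated by the (k+1)×(k+1) minors of M together with the entries M₁₁, M₁₂, …, M₁c of the first row of M|_c. -/
/-!
Border the `k × k` minor by the first row and column `b`. Expanding the bordered
`(k+1) × (k+1)` determinant along its first row, its leading term is `M₁b` times the minor,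
and every other term carries a factor `M₁ⱼ` with `j < c`. The bordered determinant is itself
a `(k+1) × (k+1)` minor of `M`, unless a row or column is repeated and it vanishes.
-/

namespace Matrix

variable {R : Type*} [CommRing R]

theorem mul_det_submatrix_succ_succ_mem {k : ℕ} {I : Ideal R}
    (A : Matrix (Fin (k + 1)) (Fin (k + 1)) R) (hdet : A.det ∈ I)
    (hrow : ∀ j, A 0 (Fin.succ j) ∈ I) :
    A 0 0 * (A.submatrix Fin.succ Fin.succ).det ∈ I := by
  have hexpand : A.det - A 0 0 * (A.submatrix Fin.succ Fin.succ).det ∈ I := by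
    rw [det_succ_row_zero, Fin.sum_univ_succ]
    simp only [Fin.val_zero, pow_zero, one_mul, Fin.succAbove_zero, add_sub_cancel_left]
    exact I.sum_mem fun j _ => I.mul_mem_right _ (I.mul_mem_left _ (hrow j))
  simpa using I.sub_mem hdet hexpand

theorem det_submatrix_eq_zero_or_injective {m n ι : Type*} [Fintype ι] [DecidableEq ι]
    (M : Matrix m n R) (r : ι → m) (s : ι → n) :
    (M.submatrix r s).det = 0 ∨ Function.Injective r ∧ Function.Injective s := by
  refine or_iff_not_imp_left.2 fun hdet => ⟨fun i j hij => ?_, fun i j hij => ?_⟩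
  · by_contra hne
    exact hdet (det_zero_of_row_eq hne (funext fun l => by simp [hij]))
  · by_contra hne
    exact hdet (det_zero_of_column_eq hne fun l => by simp [hij])

end Matrix

theorem stmt0_general {R : Type*} [CommRing R] {m n : ℕ} (hm : 0 < m)
    (M : Matrix (Fin m) (Fin n) R) (c : ℕ)
    (b : Fin n) (k : ℕ)
    (r : Fin k → Fin m) (s : Fin k → Fin n)
    (hscol : ∀ i, (s i).1 < c) :
    M ⟨0, hm⟩ b * (M.submatrix r s).det ∈
      Ideal.span
        ({x : R | ∃ (r' : Fin (k + 1) → Fin m) (s' : Fin (k + 1) → Fin n),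
            Function.Injective r' ∧ Function.Injective s' ∧
            x = (M.submatrix r' s').det} ∪
         {x : R | ∃ j : Fin n, j.1 < c ∧ x = M ⟨0, hm⟩ j}) := by
  refine (M.submatrix (Fin.cons ⟨0, hm⟩ r) (Fin.cons b s)).mul_det_submatrix_succ_succ_mem ?_
    fun j => Ideal.subset_span (Or.inr ⟨s j, hscol j, rfl⟩)
  obtain hzero | ⟨hr', hs'⟩ := M.det_submatrix_eq_zero_or_injective
    (Fin.cons ⟨0, hm⟩ r : Fin (k + 1) → Fin m) (Fin.cons b s)
  · rw [hzero]
    exact Ideal.zero_mem _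
  · exact Ideal.subset_span (Or.inl ⟨_, _, hr', hs', rfl⟩)

/-- Lemma 5.3 (Lemma on minors): for an `m × n` matrix `M` over a commutative ring,
the product of the entry `M 0 b` (with `c ≤ b`) with any `k × k` minor of the submatrix
of the first `c` columns lies in the ideal generated by the `(k+1) × (k+1)` minors of `M`
together with the first `c` entries of the first row. -/
theorem stmt0 {R : Type*} [CommRing R] {m n : ℕ} (hm : 0 < m)
    (M : Matrix (Fin m) (Fin n) R) (c : ℕ) (hc : 0 < c) (hcn : c ≤ n)
    (b : Fin n) (hb : c ≤ b.1) (k : ℕ) (hk : 0 < k)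
    (r : Fin k → Fin m) (s : Fin k → Fin n)
    (hr : Function.Injective r) (hs : Function.Injective s)
    (hscol : ∀ i, (s i).1 < c) :
    M ⟨0, hm⟩ b * (M.submatrix r s).det ∈
      Ideal.span
        ({x : R | ∃ (r' : Fin (k + 1) → Fin m) (s' : Fin (k + 1) → Fin n),
            Function.Injective r' ∧ Function.Injective s' ∧
            x = (M.submatrix r' s').det} ∪
         {x : R | ∃ j : Fin n, j.1 < c ∧ x = M ⟨0, hm⟩ j}) :=
  stmt0_general hm M c b k r s hscol
end

section
/- Let Q be an n×n orthogonal matrix over a field K (i.e., QᵀQ = 1), and let α, β ⊆ {1,…,n} be subsets of cardinality k with 1 ≤ k ≤ n−1. Then det(Q_{α|β}) = sgn(α)·sgn(β)·det(Q)·det(Q_{αᶜ|βᶜ}), where Q_{α|β} is the submatrix of Q with rows indexed by α and columns indexed by β, αᶜ and βᶜ are the complements, and sgn(α) is the sign of the permutation sending (1,…,n) to (α, αᶜ) with each block in ascending order. -/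
/-
Reorder the rows of `Q` as `(α, αᶜ)` and the columns as `(β, βᶜ)`. This multiplies the
determinant by `sgn α * sgn β`, keeps the matrix orthogonal, and turns `Q_{α|β}` and
`Q_{αᶜ|βᶜ}` into the diagonal blocks `A` and `D` of a block matrix `M = [A B; C D]`.
Since `M Mᵀ = 1`, multiplying `M` by `[1 Cᵀ; 0 Dᵀ]` gives `[A 0; C 1]`, and taking
determinants yields `det M * det D = det A`.
-/

open Finset Matrix

/-- The permutation of `Fin n` sending `(1, …, n)` to `(α, αᶜ)`, with the elements of
`α` and of `αᶜ` each listed in ascending order. -/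
noncomputable def finsetPerm {n : ℕ} (α : Finset (Fin n)) : Equiv.Perm (Fin n) :=
  ((finCongr (show n = α.card + (n - α.card) by
      have h : α.card ≤ n := by simpa using α.card_le_univ
      omega)).trans <|
    (finSumFinEquiv.symm).trans <|
    (Equiv.sumCongr (α.orderIsoOfFin rfl).toEquiv
      ((αᶜ).orderIsoOfFin (by simp [Finset.card_compl])).toEquiv).trans <|
    (Equiv.sumCongr (Equiv.refl _)
      (Equiv.subtypeEquivRight (fun x => Finset.mem_compl))).trans
    (Equiv.sumCompl (· ∈ α)))

/-- The sign `sgn(α)` of the permutation sending `(1, …, n)` to `(α, αᶜ)`. -/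
noncomputable def finsetSign {n : ℕ} (α : Finset (Fin n)) : ℤ :=
  Equiv.Perm.sign (finsetPerm α)

namespace Matrix

variable {R : Type*} [CommRing R]

theorem det_submatrix_perm_perm {n : Type*} [Fintype n] [DecidableEq n]
    (σ τ : Equiv.Perm n) (A : Matrix n n R) :
    (A.submatrix σ τ).det = Equiv.Perm.sign σ * Equiv.Perm.sign τ * A.det := by
  rw [show A.submatrix σ τ = (A.submatrix id τ).submatrix σ id from rfl, det_permute,
    det_permute']
  ring

theorem transpose_mul_self_submatrix_equiv {m n : Type*} [Fintype m] [Fintype n]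
    [DecidableEq m] [DecidableEq n] {Q : Matrix n n R} (hQ : Qᵀ * Q = 1)
    (e₁ e₂ : m ≃ n) : (Q.submatrix e₁ e₂)ᵀ * Q.submatrix e₁ e₂ = 1 := by
  rw [transpose_submatrix, submatrix_mul_equiv, hQ, submatrix_one_equiv]

theorem det_toBlocks₁₁_eq_det_mul_det_toBlocks₂₂ {m n : Type*} [Fintype m] [Fintype n]
    [DecidableEq m] [DecidableEq n] {M : Matrix (m ⊕ n) (m ⊕ n) R} (hM : Mᵀ * M = 1) :
    M.toBlocks₁₁.det = M.det * M.toBlocks₂₂.det := by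
  obtain ⟨A, B, C, D, rfl⟩ : ∃ A B C D, M = fromBlocks A B C D :=
    ⟨_, _, _, _, (fromBlocks_toBlocks M).symm⟩
  have hM' : fromBlocks A B C D * (fromBlocks A B C D)ᵀ = 1 := mul_eq_one_comm.mp hM
  rw [fromBlocks_transpose, fromBlocks_multiply, ← fromBlocks_one] at hM'
  obtain ⟨-, h₁₂, -, h₂₂⟩ := fromBlocks_inj.mp hM'
  have hfactor : fromBlocks A B C D * fromBlocks 1 Cᵀ 0 Dᵀ = fromBlocks A 0 C 1 := by
    simp [fromBlocks_multiply, h₁₂, h₂₂]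
  have hdet := congrArg det hfactor
  rw [det_mul, det_fromBlocks_zero₂₁, det_fromBlocks_zero₁₂, det_transpose] at hdet
  simpa [mul_comm] using hdet.symm

end Matrix

theorem finsetPerm_comp_finSumFinEquiv {n k : ℕ} (α : Finset (Fin n)) (hα : α.card = k)
    (hn : k + (n - k) = n) :
    finsetPerm α ∘ finCongr hn ∘ finSumFinEquiv =
      Sum.elim (fun i => ((α.orderIsoOfFin hα) i : Fin n))
        (fun j => (((αᶜ).orderIsoOfFin (by simp [Finset.card_compl, hα])) j : Fin n)) := by
  subst hα
  funext x
  cases x <;> simp [finsetPerm]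

/-- Lemma 7.6: for an orthogonal matrix `Q` and size-`k` subsets `α, β` of the indices,
`det (Q_{α|β}) = sgn α * sgn β * det Q * det (Q_{αᶜ|βᶜ})`. -/
theorem stmt1 {K : Type*} [Field K] {n k : ℕ}
    (Q : Matrix (Fin n) (Fin n) K) (hQ : Qᵀ * Q = 1)
    (α β : Finset (Fin n)) (hα : α.card = k) (hβ : β.card = k) :
    (Q.submatrix (fun i : Fin k => ((α.orderIsoOfFin hα) i : Fin n))
        (fun j : Fin k => ((β.orderIsoOfFin hβ) j : Fin n))).det
      = (finsetSign α : K) * (finsetSign β : K) * Q.det *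
        (Q.submatrix
          (fun i : Fin (n - k) =>
            (((αᶜ).orderIsoOfFin (by simp [Finset.card_compl, hα])) i : Fin n))
          (fun j : Fin (n - k) =>
            (((βᶜ).orderIsoOfFin (by simp [Finset.card_compl, hβ])) j : Fin n))).det := by
  have hn : k + (n - k) = n := by
    have := hα ▸ α.card_le_univ
    rw [Fintype.card_fin] at this
    omega
  set rows := finsetPerm α ∘ finCongr hn ∘ finSumFinEquiv with hrows
  set cols := finsetPerm β ∘ finCongr hn ∘ finSumFinEquiv with hcols
  have hdet : (Q.submatrix rows cols).det = finsetSign α * finsetSign β * Q.det := by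
    change (((Q.submatrix (finsetPerm α) (finsetPerm β)).submatrix (finCongr hn)
      (finCongr hn)).submatrix finSumFinEquiv finSumFinEquiv).det = _
    rw [det_submatrix_equiv_self, det_submatrix_equiv_self, det_submatrix_perm_perm,
      finsetSign, finsetSign]
  have horth : (Q.submatrix rows cols)ᵀ * Q.submatrix rows cols = 1 :=
    transpose_mul_self_submatrix_equiv hQ
      ((finSumFinEquiv.trans (finCongr hn)).trans (finsetPerm α))
      ((finSumFinEquiv.trans (finCongr hn)).trans (finsetPerm β))
  have hblocks := det_toBlocks₁₁_eq_det_mul_det_toBlocks₂₂ horth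
  rwa [hdet, hrows, hcols, finsetPerm_comp_finSumFinEquiv α hα hn,
    finsetPerm_comp_finSumFinEquiv β hβ hn] at hblocks
end

section
/- Let S be an ℕ-graded ring, finitely generated over a field S₀. Let I be a homogeneous ideal and P a homogeneous prime ideal with I ⊆ P. Suppose there exists a homogeneous element x of positive degree with x ∉ P such that I + xS is a radical ideal. If xP ⊆ I, then I is a radical ideal. -/
/-!
If `y ∈ √I`, then `y ∈ √(I + xS) = I + xS`, say `y = i + s * x` with `i ∈ I`. Then
`s * x = y - i ∈ √I ⊆ P`, so `s ∈ P` because `P` is prime and `x ∉ P`; hence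
`s * x ∈ xP ⊆ I` and `y ∈ I`.
-/

theorem stmt10_general {S : Type*} [CommRing S]
    (I P : Ideal S)
    (hprime : P.IsPrime) (hIP : I ≤ P)
    (x : S) (hxP : x ∉ P)
    (hrad : (I + Ideal.span {x}).IsRadical)
    (hxPI : ∀ p ∈ P, x * p ∈ I) :
    I.IsRadical := by
  intro y hy
  obtain ⟨i, hi, _, hsx, rfl⟩ :=
    Submodule.mem_sup.mp (hrad (Ideal.radical_mono le_sup_left hy))
  obtain ⟨s, rfl⟩ := Ideal.mem_span_singleton'.mp hsx
  have hsx_rad : s * x ∈ I.radical := by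
    simpa using Ideal.sub_mem _ hy (Ideal.le_radical hi)
  have hs : s ∈ P :=
    (hprime.mem_or_mem (hprime.isRadical.radical_le_iff.mpr hIP hsx_rad)).resolve_right hxP
  exact I.add_mem hi (mul_comm x s ▸ hxPI s hs)

/-- Lemma 5.1(1) (principal radical systems): let `S` be an ℕ-graded ring, finitely
generated over a field `S₀ = K`. If `I ⊆ P` with `P` a homogeneous prime, `x` homogeneous
of positive degree with `x ∉ P`, `I + xS` radical, and `xP ⊆ I`, then `I` is radical. -/
theorem stmt10 {K S : Type*} [Field K] [CommRing S] [Algebra K S]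
    (𝒜 : ℕ → Submodule K S) [GradedAlgebra 𝒜]
    (hfg : Algebra.FiniteType K S)
    (I P : Ideal S) (hI : I.IsHomogeneous 𝒜) (hP : P.IsHomogeneous 𝒜)
    (hprime : P.IsPrime) (hIP : I ≤ P)
    (x : S) (d : ℕ) (hd : 0 < d) (hx : x ∈ 𝒜 d) (hxP : x ∉ P)
    (hrad : (I + Ideal.span {x}).IsRadical)
    (hxPI : ∀ p ∈ P, x * p ∈ I) :
    I.IsRadical :=
  stmt10_general I P hprime hIP x hxP hrad hxPI
end

section
/- Let S be an ℕ-graded ring, finitely generated over a field S₀. Let I be a homogeneous ideal and P a homogeneous prime ideal with I ⊆ P and rad I = P. Suppose there exists a homogeneous element x of positive degree with x ∉ P such that I + xS is a radical ideal. Then I = P; in particular, I is prime. -/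
/-!
Since `I + xS` is radical and contains `I`, it contains `rad I = P`. Writing `p ∈ P` as
`i + c x` with `i ∈ I`, primality and `x ∉ P` force `c ∈ P`, so `P = I + xP`, and iterating,
`P = I + xⁿP` for every `n`. A homogeneous `p ∈ P` of degree `e` is then the degree-`e`
component of some `i + x^(e+1) s`; as `x^(e+1)` has degree `(e+1) deg x > e`, that component
is the one of `i`, which lies in `I` because `I` is homogeneous. Both ideals being homogeneous,
`P ≤ I`.
-/

open DirectSum

namespace Ideal

variable {R : Type*} [CommRing R]

theorem le_sup_span_singleton_mul_of_le_sup_span_singleton {I P : Ideal R} [P.IsPrime] {x : R}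
    (hIP : I ≤ P) (hxP : x ∉ P) (hP : P ≤ I ⊔ span {x}) : P ≤ I ⊔ span {x} * P := by
  intro p hp
  obtain ⟨i, hi, y, hy, rfl⟩ := Submodule.mem_sup.mp (hP hp)
  obtain ⟨c, rfl⟩ := mem_span_singleton'.mp hy
  have hcx : c * x ∈ P := by simpa using P.sub_mem hp (hIP hi)
  have hc : c ∈ P := (IsPrime.mem_or_mem ‹_› hcx).resolve_right hxP
  exact Submodule.add_mem_sup hi (mul_comm x c ▸ mul_mem_mul (mem_span_singleton_self x) hc)

theorem le_sup_span_singleton_pow_mul {I P : Ideal R} {x : R} (hP : P ≤ I ⊔ span {x} * P)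
    (n : ℕ) : P ≤ I ⊔ span {x ^ n} * P := by
  induction n with
  | zero => simp
  | succ n ih =>
    calc P ≤ I ⊔ span {x ^ n} * P := ih
      _ ≤ I ⊔ span {x ^ n} * (I ⊔ span {x} * P) := sup_le_sup_left (mul_mono_right hP) _
      _ = I ⊔ span {x ^ n} * I ⊔ span {x ^ (n + 1)} * P := by
        rw [mul_sup, ← mul_assoc, span_singleton_mul_span_singleton, ← pow_succ, sup_assoc]
      _ = I ⊔ span {x ^ (n + 1)} * P := by rw [sup_eq_left.mpr (mul_le_right : span {x ^ n} * I ≤ I)]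

end Ideal

section CanonicalOrder

variable {ι A σ : Type*} [DecidableEq ι] [AddCommMonoid ι] [PartialOrder ι]
  [CanonicallyOrderedAdd ι] [CommSemiring A] [SetLike σ A] [AddSubmonoidClass σ A]
  {𝒜 : ι → σ} [GradedRing 𝒜]

theorem Ideal.IsHomogeneous.mem_of_mem_sup_span_singleton_mul {I J : Ideal A}
    (hI : I.IsHomogeneous 𝒜) {y p : A} {m e : ι} (hy : y ∈ 𝒜 m) (hme : ¬m ≤ e) (hp : p ∈ 𝒜 e)
    (hpI : p ∈ I ⊔ Ideal.span {y} * J) : p ∈ I := by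
  obtain ⟨i, hi, q, hq, rfl⟩ := Submodule.mem_sup.mp hpI
  obtain ⟨z, -, rfl⟩ := Ideal.mem_span_singleton_mul.mp hq
  have hdeg : (decompose 𝒜 (i + y * z) e : A) = decompose 𝒜 i e := by
    rw [decompose_add, DFinsupp.add_apply, AddMemClass.coe_add,
      coe_decompose_mul_of_left_mem_of_not_le 𝒜 hy hme, add_zero]
  rw [← decompose_of_mem_same 𝒜 hp, hdeg]
  exact hI e hi

end CanonicalOrder

theorem Ideal.IsHomogeneous.le_of_forall_mem_graded {ι A σ : Type*} [DecidableEq ι] [AddMonoid ι]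
    [Semiring A] [SetLike σ A] [AddSubmonoidClass σ A] {𝒜 : ι → σ} [GradedRing 𝒜]
    {I J : Ideal A} (hI : I.IsHomogeneous 𝒜) (hJ : J.IsHomogeneous 𝒜)
    (h : ∀ e, ∀ p ∈ J, p ∈ 𝒜 e → p ∈ I) : J ≤ I :=
  fun _ hp => hI.mem_iff.mpr fun e => h e _ (hJ e hp) (SetLike.coe_mem _)

theorem stmt11_general {K S : Type*} [Field K] [CommRing S] [Algebra K S]
    (𝒜 : ℕ → Submodule K S) [GradedAlgebra 𝒜]
    (I P : Ideal S) (hI : I.IsHomogeneous 𝒜) (hP : P.IsHomogeneous 𝒜)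
    (hprime : P.IsPrime) (hIP : I ≤ P) (hradIP : I.radical = P)
    (x : S) (d : ℕ) (hd : 0 < d) (hx : x ∈ 𝒜 d) (hxP : x ∉ P)
    (hrad : (I + Ideal.span {x}).IsRadical) :
    I = P := by
  have hP_le : P ≤ I ⊔ Ideal.span {x} := by
    rw [← hradIP, ← Ideal.add_eq_sup, ← hrad.radical]
    exact Ideal.radical_mono le_sup_left
  have hP_le_mul := Ideal.le_sup_span_singleton_mul_of_le_sup_span_singleton hIP hxP hP_le
  refine le_antisymm hIP (hI.le_of_forall_mem_graded hP fun e p hp hpe => ?_)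
  have hxe : x ^ (e + 1) ∈ 𝒜 ((e + 1) * d) := by
    simpa using SetLike.pow_mem_graded (e + 1) hx
  exact hI.mem_of_mem_sup_span_singleton_mul hxe (by nlinarith) hpe
    (Ideal.le_sup_span_singleton_pow_mul hP_le_mul (e + 1) hp)

/-- Lemma 5.1(2) (principal radical systems): let `S` be an ℕ-graded ring, finitely
generated over a field `S₀ = K`. If `I ⊆ P` with `P` a homogeneous prime, `rad I = P`,
and `x` is homogeneous of positive degree with `x ∉ P` and `I + xS` radical,
then `I = P`; in particular `I` is prime. -/
theorem stmt11 {K S : Type*} [Field K] [CommRing S] [Algebra K S]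
    (𝒜 : ℕ → Submodule K S) [GradedAlgebra 𝒜]
    (hfg : Algebra.FiniteType K S)
    (I P : Ideal S) (hI : I.IsHomogeneous 𝒜) (hP : P.IsHomogeneous 𝒜)
    (hprime : P.IsPrime) (hIP : I ≤ P) (hradIP : I.radical = P)
    (x : S) (d : ℕ) (hd : 0 < d) (hx : x ∈ 𝒜 d) (hxP : x ∉ P)
    (hrad : (I + Ideal.span {x}).IsRadical) :
    I = P :=
  stmt11_general 𝒜 I P hI hP hprime hIP hradIP x d hd hx hxP hrad
end

section
/- Let K be a field of characteristic other than two, and let Q = (A, B; C, D) be an n×n orthogonal matrix (QQᵀ = 1) partitioned so that A is k×k and D is (n−k)×(n−k). Then det(Q)·det(D) = det(A). -/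
open Matrix

/-!
Write `Q = (A, B; C, D)`. The off-diagonal and lower-right blocks of `Q Qᵀ = 1` say
`A Cᵀ + B Dᵀ = 0` and `C Cᵀ + D Dᵀ = 1`, hence `Q (1, Cᵀ; 0, Dᵀ) = (A, 0; C, 1)`.
Both factors on the left and the right-hand side are block triangular, so taking
determinants gives `det Q · det D = det A`.
-/

namespace Matrix

variable {R : Type*} [CommRing R] {m n : Type*} [Fintype m] [Fintype n]
  [DecidableEq m] [DecidableEq n]

theorem mul_fromBlocks_one_transpose_toBlocks₂_of_mul_transpose_eq_one
    {Q : Matrix (m ⊕ n) (m ⊕ n) R} (hQ : Q * Qᵀ = 1) :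
    Q * fromBlocks 1 Q.toBlocks₂₁ᵀ 0 Q.toBlocks₂₂ᵀ = fromBlocks Q.toBlocks₁₁ 0 Q.toBlocks₂₁ 1 := by
  rw [← fromBlocks_toBlocks Q, fromBlocks_transpose, fromBlocks_multiply, ← fromBlocks_one,
    fromBlocks_inj] at hQ
  obtain ⟨-, h₁₂, -, h₂₂⟩ := hQ
  conv_lhs => rw [← fromBlocks_toBlocks Q]
  simp [fromBlocks_multiply, h₁₂, h₂₂]

theorem det_mul_det_toBlocks₂₂_of_mul_transpose_eq_one
    {Q : Matrix (m ⊕ n) (m ⊕ n) R} (hQ : Q * Qᵀ = 1) :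
    Q.det * Q.toBlocks₂₂.det = Q.toBlocks₁₁.det := by
  have h := congrArg det (mul_fromBlocks_one_transpose_toBlocks₂_of_mul_transpose_eq_one hQ)
  rwa [det_mul, det_fromBlocks_zero₂₁, det_fromBlocks_zero₁₂, det_one, det_one, one_mul,
    mul_one, det_transpose] at h

end Matrix

theorem stmt19_general {K : Type*} [Field K] {k m : ℕ}
    (Q : Matrix (Fin k ⊕ Fin m) (Fin k ⊕ Fin m) K) (hQ : Q * Qᵀ = 1) :
    Q.det * (Q.toBlocks₂₂).det = (Q.toBlocks₁₁).det :=
  det_mul_det_toBlocks₂₂_of_mul_transpose_eq_one hQ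

/-- For an orthogonal matrix `Q = (A, B; C, D)` over a field of characteristic `≠ 2`,
partitioned with `A` of size `k × k` and `D` of size `m × m`, one has
`det Q · det D = det A`. -/
theorem stmt19 {K : Type*} [Field K] (hchar : ringChar K ≠ 2) {k m : ℕ}
    (Q : Matrix (Fin k ⊕ Fin m) (Fin k ⊕ Fin m) K) (hQ : Q * Qᵀ = 1) :
    Q.det * (Q.toBlocks₂₂).det = (Q.toBlocks₁₁).det :=
  stmt19_general Q hQ
end
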